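/- arXiv:2002.08638 — 4 statements merged into one kernel-verified Lean document; each statement's English description precedes it below -/
import Mathlib

section
/- If M is a nonempty compact connected locally connected metric space, then M is the continuous image of the unit interval [0,1]; conversely, any Hausdorff continuous image of [0,1] is a compact, connected, locally connected metric space. -/
/-!
Compactness and local connectedness give, for every `ε > 0`, a `δ > 0` such that points closer
than `δ` are joined inside the `ε`-ball by chains of arbitrarily small mesh. Using this, build
chains `p_k` of mesh `δ_k` through finer and finer nets, where `p_(k+1)` replaces each step of
`p_k` by a block of `m_k` points staying within `2⁻ᵏ` of the start of that step. The step maps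
`t ↦ p_k ⌊t N_k⌋` then converge uniformly to a continuous map `[0,1] → M` whose range is compact
and dense, hence all of `M`.

Conversely, a continuous surjection from `[0,1]` onto a Hausdorff space is a closed quotient map;
local connectedness passes to quotients, and since fibres are compact, finite unions of basic
open sets around fibres yield a countable basis, so Urysohn's metrization theorem applies.
-/

open Set Metric

section EpsChain

variable {M : Type*} [PseudoMetricSpace M]

/-- Chains are sequences that rest at their endpoint from time `L` on, rather than lists, so that
blocks of different lengths line up with a common length `m` without padding. -/
structure IsEpsChain (η : ℝ) (S : Set M) (x y : M) (L : ℕ) (c : ℕ → M) : Prop where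
  apply_zero : c 0 = x
  apply_of_le : ∀ n, L ≤ n → c n = y
  dist_lt : ∀ n, dist (c n) (c (n + 1)) < η
  mem : ∀ n, c n ∈ S

namespace IsEpsChain

variable {η : ℝ} {S T : Set M} {x y z : M} {L L₁ L₂ : ℕ} {c c₁ c₂ : ℕ → M}

lemma pos (h : IsEpsChain η S x y L c) : 0 < η :=
  dist_nonneg.trans_lt (h.dist_lt 0)

lemma pair (hxy : dist x y < η) (hx : x ∈ S) (hy : y ∈ S) :
    IsEpsChain η S x y 1 (fun n => if n = 0 then x else y) where
  apply_zero := rfl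
  apply_of_le n hn := if_neg (by omega)
  dist_lt n := by rcases n with _ | n <;> simp [hxy, (dist_nonneg.trans_lt hxy)]
  mem n := by split_ifs <;> assumption

lemma mono (h : IsEpsChain η S x y L c) (hST : S ⊆ T) : IsEpsChain η T x y L c :=
  ⟨h.apply_zero, h.apply_of_le, h.dist_lt, fun n => hST (h.mem n)⟩

lemma reverse (h : IsEpsChain η S x y L c) : IsEpsChain η S y x L (fun n => c (L - n)) where
  apply_zero := by simpa using h.apply_of_le L le_rfl
  apply_of_le n hn := by simpa [Nat.sub_eq_zero_of_le hn] using h.apply_zero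
  dist_lt n := by
    rcases lt_or_ge n L with hn | hn
    · have := h.dist_lt (L - (n + 1))
      rwa [dist_comm, show L - (n + 1) + 1 = L - n by omega] at this
    · simpa [Nat.sub_eq_zero_of_le hn, Nat.sub_eq_zero_of_le (hn.trans n.le_succ)] using h.pos
  mem n := h.mem _

lemma append (h₁ : IsEpsChain η S x y L₁ c₁) (h₂ : IsEpsChain η S y z L₂ c₂) :
    IsEpsChain η S x z (L₁ + L₂) (fun n => if n ≤ L₁ then c₁ n else c₂ (n - L₁)) where
  apply_zero := by simpa using h₁.apply_zero
  apply_of_le n hn := by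
    split_ifs
    · rw [h₁.apply_of_le n (by omega), ← h₂.apply_zero, h₂.apply_of_le 0 (by omega)]
    · exact h₂.apply_of_le _ (by omega)
  dist_lt n := by
    rcases lt_trichotomy n L₁ with hn | rfl | hn
    · simpa [hn.le, Nat.succ_le_of_lt hn] using h₁.dist_lt n
    · simpa [h₁.apply_of_le n le_rfl, ← h₂.apply_zero] using h₂.dist_lt 0
    · simpa [hn.not_ge, show ¬ n + 1 ≤ L₁ by omega, show n + 1 - L₁ = n - L₁ + 1 by omega]
        using h₂.dist_lt (n - L₁)
  mem n := by split_ifs; exacts [h₁.mem n, h₂.mem _]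

lemma exists_loop (h : IsEpsChain η S x y L c) :
    ∃ L' c', IsEpsChain η S x x L' c' ∧ ∃ n ≤ L', c' n = y :=
  ⟨_, _, h.append h.reverse, L, by omega, by simp [h.apply_of_le L le_rfl]⟩

lemma append_apply_add (h₁ : IsEpsChain η S x y L₁ c₁) (h₂ : IsEpsChain η S y z L₂ c₂) (n : ℕ) :
    (fun n => if n ≤ L₁ then c₁ n else c₂ (n - L₁)) (L₁ + n) = c₂ n := by
  rcases n with _ | n
  · simp [h₁.apply_of_le L₁ le_rfl, h₂.apply_zero]
  · simp

end IsEpsChain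

lemma IsPreconnected.exists_isEpsChain {A : Set M} (hA : IsPreconnected A) {x y : M} (hx : x ∈ A)
    (hy : y ∈ A) {η : ℝ} (hη : 0 < η) : ∃ L c, IsEpsChain η A x y L c := by
  refine hA.induction₂ (fun x y => ∃ L c, IsEpsChain η A x y L c) (fun x hx => ?_)
    (fun x y z _ _ _ ⟨L₁, c₁, h₁⟩ ⟨L₂, c₂, h₂⟩ => ⟨_, _, h₁.append h₂⟩)
    (fun x y _ _ ⟨L, c, h⟩ => ⟨L, _, h.reverse⟩) hx hy
  filter_upwards [inter_mem_nhdsWithin A (ball_mem_nhds x hη), self_mem_nhdsWithin] with y hy hyA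
  exact ⟨1, _, .pair (by simpa [dist_comm] using hy.2) hx hyA⟩

lemma exists_isEpsChain_visiting {η : ℝ} {S : Set M} {x y : M} (F : Finset M)
    (hloop : ∀ z ∈ F, ∃ L c, IsEpsChain η S x x L c ∧ ∃ n ≤ L, c n = z)
    (hxy : ∃ L c, IsEpsChain η S x y L c) :
    ∃ L c, IsEpsChain η S x y L c ∧ ∀ z ∈ F, ∃ n ≤ L, c n = z := by
  classical
  induction F using Finset.induction_on with
  | empty => simpa using hxy
  | insert z F _ ih =>
    obtain ⟨L, c, hc, hvisit⟩ := ih fun w hw => hloop w (Finset.mem_insert_of_mem hw)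
    obtain ⟨L₀, c₀, hc₀, n₀, hn₀, rfl⟩ := hloop z (Finset.mem_insert_self z F)
    refine ⟨_, _, hc₀.append hc, ?_⟩
    simp only [Finset.mem_insert, forall_eq_or_imp]
    refine ⟨⟨n₀, by omega, by simp [hn₀]⟩, fun w hw => ?_⟩
    obtain ⟨n, hn, rfl⟩ := hvisit w hw
    exact ⟨L₀ + n, by omega, hc₀.append_apply_add hc n⟩

def IsChainModulus (M : Type*) [PseudoMetricSpace M] (δ : ℕ → ℝ) : Prop :=
  ∀ k (x y : M), dist x y < δ k → ∀ η > 0, ∃ L c, IsEpsChain η (closedBall x ((1 / 2) ^ k)) x y L c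

lemma exists_isEpsChain_closedBall [CompactSpace M] [LocallyConnectedSpace M] {ε : ℝ} (hε : 0 < ε) :
    ∃ δ > 0, δ ≤ ε ∧ ∀ x y : M, dist x y < δ → ∀ η > 0,
      ∃ L c, IsEpsChain η (closedBall x ε) x y L c := by
  choose V hVball hVopen hVmem hVconn using fun z : M =>
    (locallyConnectedSpace_iff_subsets_isOpen_isConnected.1 ‹_›) z _ (ball_mem_nhds z (half_pos hε))
  obtain ⟨δ, hδ, hV⟩ := lebesgue_number_lemma_of_metric isCompact_univ hVopen
    (fun z _ => mem_iUnion.2 ⟨z, hVmem z⟩)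
  refine ⟨min δ ε, lt_min hδ hε, min_le_right δ ε, fun x y hxy η hη => ?_⟩
  obtain ⟨z, hz⟩ := hV x (mem_univ x)
  have hx : x ∈ V z := hz (mem_ball_self hδ)
  have hy : y ∈ V z := hz (mem_ball'.2 (hxy.trans_le (min_le_left δ ε)))
  obtain ⟨L, c, hc⟩ := (hVconn z).isPreconnected.exists_isEpsChain hx hy hη
  refine ⟨L, c, hc.mono fun w hw => ?_⟩
  have h₁ := hVball z hw
  have h₂ := hVball z hx
  rw [mem_ball] at h₁ h₂
  rw [mem_closedBall]
  linarith [dist_triangle_right w x z]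

lemma IsChainModulus.exists_isEpsChain_visiting {δ : ℕ → ℝ} (hchain : IsChainModulus M δ)
    {k : ℕ} (hδ : 0 < δ (k + 1)) {x y : M} (hxy : dist x y < δ k) (F : Finset M)
    (hF : ∀ z ∈ F, dist x z < δ (k + 1)) :
    ∃ L c, IsEpsChain (δ (k + 1)) (closedBall x ((1 / 2) ^ k)) x y L c ∧
      ∀ z ∈ F, ∃ n ≤ L, c n = z := by
  refine _root_.exists_isEpsChain_visiting F (fun z hz => ?_) (hchain k x y hxy _ hδ)
  obtain ⟨L, c, hc⟩ := hchain (k + 1) x z (hF z hz) _ hδ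
  obtain ⟨L', c', hc', hvisit⟩ := hc.exists_loop
  exact ⟨L', c', hc'.mono (closedBall_subset_closedBall
    (pow_le_pow_of_le_one (by norm_num) (by norm_num) k.le_succ)), hvisit⟩

end EpsChain

lemma dist_blocks_lt {M : Type*} [PseudoMetricSpace M] {η : ℝ} (hη : 0 < η) {m : ℕ} (hm : 0 < m)
    {c : ℕ → ℕ → M} (hstep : ∀ i n, dist (c i n) (c i (n + 1)) < η)
    (hjoin : ∀ i, c i (m - 1) = c (i + 1) 0) (j : ℕ) :
    dist (c (j / m) (j % m)) (c ((j + 1) / m) ((j + 1) % m)) < η := by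
  rcases Nat.lt_or_ge (j % m + 1) m with h | h
  · obtain ⟨hq, hr⟩ := (Nat.div_mod_unique (a := j + 1) (d := j / m) hm).2
      ⟨by linarith [Nat.div_add_mod j m], h⟩
    rw [hq, hr]
    exact hstep _ _
  · obtain ⟨hq, hr⟩ := (Nat.div_mod_unique (a := j + 1) (d := j / m + 1) (c := 0) hm).2
      ⟨by rw [mul_add]; linarith [Nat.div_add_mod j m, Nat.mod_lt j hm], hm⟩
    rw [hq, hr, show j % m = m - 1 by have := Nat.mod_lt j hm; omega, hjoin, dist_self]
    exact hη

lemma exists_seq_of_exists_succ {α : Type*} {P : ℕ → α → Prop} {R : ℕ → α → α → Prop}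
    (h₀ : ∃ a, P 0 a) (hsucc : ∀ k a, P k a → ∃ b, P (k + 1) b ∧ R k a b) :
    ∃ s : ℕ → α, ∀ k, P k (s k) ∧ R k (s k) (s (k + 1)) := by
  obtain ⟨a₀, ha₀⟩ := h₀
  choose! next hnextP hnextR using hsucc
  let s : ℕ → α := fun k => Nat.rec a₀ next k
  have hs : ∀ k, P k (s k) := fun k => by
    induction k with
    | zero => exact ha₀
    | succ k ih => exact hnextP k _ ih
  exact ⟨s, fun k => ⟨hs k, hnextR k _ (hs k)⟩⟩

section Stage

variable {M : Type*} [PseudoMetricSpace M]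

lemma exists_finset_forall_dist_lt [CompactSpace M] {r : ℝ} (hr : 0 < r) :
    ∃ Z : Finset M, ∀ y, ∃ z ∈ Z, dist y z < r := by
  obtain ⟨t, -, ht, hcover⟩ := finite_cover_balls_of_compact (isCompact_univ (X := M)) hr
  refine ⟨ht.toFinset, fun y => ?_⟩
  obtain ⟨z, hz, hyz⟩ := mem_iUnion₂.1 (hcover (mem_univ y))
  exact ⟨z, ht.mem_toFinset.2 hz, hyz⟩

/-- The net is at the finer scale `δ (k + 1)` so that the next stage can reach each net point by a
detour of mesh `δ (k + 1)`; `p N` closes the last step. -/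
structure IsStage (δ : ℕ → ℝ) (k N : ℕ) (p : ℕ → M) : Prop where
  dist_lt : ∀ j, dist (p j) (p (j + 1)) < δ k
  dense : ∀ y, ∃ j < N, dist y (p j) < δ (k + 1)

variable {δ : ℕ → ℝ}

lemma IsStage.pos [Nonempty M] {k N : ℕ} {p : ℕ → M} (h : IsStage δ k N p) : 0 < N :=
  let ⟨j, hj, _⟩ := h.dense (Classical.arbitrary M)
  (Nat.zero_le j).trans_lt hj

lemma exists_isStage_zero [CompactSpace M] [ConnectedSpace M] [Nonempty M] (hδ : ∀ k, 0 < δ k) :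
    ∃ (N : ℕ) (p : ℕ → M), IsStage δ 0 N p := by
  obtain ⟨Z, hZ⟩ := exists_finset_forall_dist_lt (M := M) (hδ 1)
  have hchain : ∀ y z : M, ∃ L c, IsEpsChain (δ 0) univ y z L c := fun y z =>
    isPreconnected_univ.exists_isEpsChain (mem_univ y) (mem_univ z) (hδ 0)
  obtain ⟨x⟩ := ‹Nonempty M›
  obtain ⟨L, c, hc, hvisit⟩ := exists_isEpsChain_visiting Z
    (fun z _ => let ⟨_, _, h⟩ := hchain x z; h.exists_loop) (hchain x x)
  refine ⟨L + 1, c, hc.dist_lt, fun y => ?_⟩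
  obtain ⟨z, hz, hyz⟩ := hZ y
  obtain ⟨n, hn, rfl⟩ := hvisit z hz
  exact ⟨n, by omega, hyz⟩

lemma exists_concat_blocks {η r : ℝ} (hη : 0 < η) (hr : 0 ≤ r) {N : ℕ} {p : ℕ → M}
    {L : ℕ → ℕ} {c : ℕ → ℕ → M}
    (hc : ∀ i < N, IsEpsChain η (closedBall (p i) r) (p i) (p (i + 1)) (L i) (c i)) :
    ∃ m, ∃ p' : ℕ → M, (∀ j, dist (p' j) (p' (j + 1)) < η) ∧
      (∀ i < N, ∀ n ≤ L i, ∃ j < N * m, p' j = c i n) ∧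
      ∀ j ≤ N * m, dist (p' j) (p (j / m)) ≤ r := by
  set m := (Finset.range N).sup L + 1
  have hm : 0 < m := Nat.succ_pos _
  have hLm : ∀ i < N, L i < m := fun i hi =>
    Nat.lt_succ_of_le (Finset.le_sup (f := L) (Finset.mem_range.2 hi))
  set b : ℕ → ℕ → M := fun i => if i < N then c i else fun _ => p N
  have hb : ∀ i < N, b i = c i := fun i hi => if_pos hi
  have hb' : ∀ i, N ≤ i → b i = fun _ => p N := fun i hi => if_neg hi.not_gt
  refine ⟨m, fun j => b (j / m) (j % m), fun j => dist_blocks_lt hη hm ?_ ?_ j, ?_, ?_⟩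
  · intro i n
    rcases lt_or_ge i N with hi | hi
    · rw [hb i hi]; exact (hc i hi).dist_lt n
    · simpa [hb' i hi] using hη
  · intro i
    rcases lt_or_ge i N with hi | hi
    · rw [hb i hi, (hc i hi).apply_of_le _ (by have := hLm i hi; omega)]
      rcases lt_or_ge (i + 1) N with hi' | hi'
      · rw [hb (i + 1) hi', (hc (i + 1) hi').apply_zero]
      · rw [hb' (i + 1) hi', show i + 1 = N by omega]
    · rw [hb' i hi, hb' (i + 1) (by omega)]
  · intro i hi n hn
    have := hLm i hi
    obtain ⟨hdiv, hmod⟩ := (Nat.div_mod_unique (a := m * i + n) hm).2 ⟨add_comm _ _, by omega⟩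
    exact ⟨m * i + n, by nlinarith, by simp only [hdiv, hmod, hb i hi]⟩
  · intro j hj
    rcases hj.lt_or_eq with hj | rfl
    · have hi : j / m < N := Nat.div_lt_of_lt_mul (by rwa [mul_comm])
      simpa [hb _ hi] using (hc _ hi).mem (j % m)
    · simp [Nat.mul_div_cancel N hm, hb' N le_rfl, hr]

/-- Each step `p i`, `p (i + 1)` is refined into a block of `m` points: a finer chain from `p i`
to `p (i + 1)` with a detour through each point of a finer net that is close to `p i`. -/
lemma IsStage.exists_refinement [CompactSpace M] (hδ : ∀ k, 0 < δ k)
    (hchain : IsChainModulus M δ) {k N : ℕ} {p : ℕ → M} (h : IsStage δ k N p) :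
    ∃ m, ∃ p' : ℕ → M, IsStage δ (k + 1) (N * m) p' ∧
      ∀ j ≤ N * m, dist (p' j) (p (j / m)) ≤ (1 / 2) ^ k := by
  obtain ⟨Z, hZ⟩ := exists_finset_forall_dist_lt (M := M) (hδ (k + 2))
  choose ι hιN hι using h.dense
  have hblock (i : ℕ) (_ : i < N) := hchain.exists_isEpsChain_visiting (hδ (k + 1))
    (h.dist_lt i) (Z.filter (ι · = i)) fun z hz => by
      rw [← (Finset.mem_filter.1 hz).2, dist_comm]; exact hι z
  have : Nonempty M := ⟨p 0⟩
  choose! L c hc hvisit using hblock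
  obtain ⟨m, p', hstep, hvisit', hclose⟩ := exists_concat_blocks (hδ (k + 1)) (by positivity) hc
  refine ⟨m, p', ⟨hstep, fun y => ?_⟩, hclose⟩
  obtain ⟨z, hz, hyz⟩ := hZ y
  obtain ⟨n, hn, hnz⟩ := hvisit (ι z) (hιN z) z (Finset.mem_filter.2 ⟨hz, rfl⟩)
  obtain ⟨j, hj, hjn⟩ := hvisit' (ι z) (hιN z) n hn
  exact ⟨j, hj, by rwa [hjn, hnz]⟩

lemma exists_refining_stages [CompactSpace M] [ConnectedSpace M] [Nonempty M]
    (hδ : ∀ k, 0 < δ k) (hchain : IsChainModulus M δ) :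
    ∃ (N m : ℕ → ℕ) (p : ℕ → ℕ → M), ∀ k, IsStage δ k (N k) (p k) ∧ N (k + 1) = N k * m k ∧
      ∀ j ≤ N (k + 1), dist (p (k + 1) j) (p k (j / m k)) ≤ (1 / 2) ^ k := by
  obtain ⟨s, hs⟩ := exists_seq_of_exists_succ
    (P := fun k (s : ℕ × (ℕ → M)) => IsStage δ k s.1 s.2)
    (R := fun k s s' => ∃ m, s'.1 = s.1 * m ∧
      ∀ j ≤ s'.1, dist (s'.2 j) (s.2 (j / m)) ≤ (1 / 2) ^ k)
    (let ⟨N, p, h⟩ := exists_isStage_zero hδ; ⟨(N, p), h⟩)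
    (fun k s hs => let ⟨m, p', hp', href⟩ := hs.exists_refinement hδ hchain
      ⟨(s.1 * m, p'), hp', m, rfl, href⟩)
  choose m hNm href using fun k => (hs k).2
  exact ⟨fun k => (s k).1, m, fun k => (s k).2, fun k => ⟨(hs k).1, hNm k, href k⟩⟩

end Stage

section Limit

variable {M : Type*} [PseudoMetricSpace M]

lemma Nat.floor_mul_mul_div (t : ℝ) (N : ℕ) {m : ℕ} (hm : 0 < m) :
    ⌊t * ↑(N * m)⌋₊ / m = ⌊t * N⌋₊ := by
  rw [← Nat.floor_div_natCast, Nat.cast_mul, ← mul_assoc, mul_div_cancel_right₀ _ (by positivity)]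

lemma dist_apply_floor_le {p : ℕ → M} {N : ℕ} (hN : 0 < N) {r : ℝ} (hr : 0 ≤ r)
    (hp : ∀ j < N, dist (p j) (p (j + 1)) ≤ r) {s t : ℝ} (hs : s ∈ Icc (0 : ℝ) 1)
    (ht : t ∈ Icc (0 : ℝ) 1) (hst : dist s t < 1 / N) :
    dist (p ⌊s * N⌋₊) (p ⌊t * N⌋₊) ≤ r := by
  wlog hle : ⌊s * N⌋₊ ≤ ⌊t * N⌋₊ generalizing s t
  · rw [dist_comm]; exact this ht hs (by rwa [dist_comm]) (by omega)
  have hN' : (0 : ℝ) < N := Nat.cast_pos.2 hN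
  have hts : t * N < s * N + 1 := by
    rw [Real.dist_eq, lt_div_iff₀ hN'] at hst
    nlinarith [neg_abs_le (s - t)]
  have hsucc : ⌊t * N⌋₊ ≤ ⌊s * N⌋₊ + 1 := by
    rw [← Nat.floor_add_one (mul_nonneg hs.1 hN'.le)]
    exact Nat.floor_le_floor hts.le
  have htN : ⌊t * N⌋₊ ≤ N := Nat.floor_le_of_le (by nlinarith [ht.2])
  rcases hle.lt_or_eq with h | h
  · rw [show ⌊t * N⌋₊ = ⌊s * N⌋₊ + 1 by omega]
    exact hp _ (by omega)
  · rw [h, dist_self]; exact hr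

theorem exists_continuous_of_refining [CompleteSpace M] {N m : ℕ → ℕ} {p : ℕ → ℕ → M}
    (hN : ∀ k, 0 < N k) (hNm : ∀ k, N (k + 1) = N k * m k)
    (hstep : ∀ k, ∀ j < N k, dist (p k j) (p k (j + 1)) ≤ (1 / 2) ^ k)
    (href : ∀ k, ∀ j ≤ N (k + 1), dist (p (k + 1) j) (p k (j / m k)) ≤ (1 / 2) ^ k) :
    ∃ f : Icc (0 : ℝ) 1 → M, Continuous f ∧
      ∀ k (t : Icc (0 : ℝ) 1), dist (p k ⌊(t : ℝ) * N k⌋₊) (f t) ≤ 2 * (1 / 2) ^ k := by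
  set g : ℕ → Icc (0 : ℝ) 1 → M := fun k t => p k ⌊(t : ℝ) * N k⌋₊
  have hg : ∀ t k, dist (g k t) (g (k + 1) t) ≤ 1 * (1 / 2) ^ k := by
    intro t k
    have hm : 0 < m k := Nat.pos_of_mul_pos_left (hNm k ▸ hN (k + 1))
    rw [one_mul, dist_comm]
    have := href k ⌊(t : ℝ) * N (k + 1)⌋₊ (Nat.floor_le_of_le (by nlinarith [t.2.1, t.2.2]))
    simpa only [g, hNm, Nat.floor_mul_mul_div _ _ hm] using this
  choose f hf using fun t =>
    cauchySeq_tendsto_of_complete (cauchySeq_of_le_geometric _ _ (by norm_num) (hg t))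
  have htail : ∀ k t, dist (g k t) (f t) ≤ 2 * (1 / 2) ^ k := fun k t =>
    (dist_le_of_le_geometric_of_tendsto _ _ (by norm_num) (hg t) (hf t) k).trans_eq (by ring)
  refine ⟨f, (Metric.uniformContinuous_iff.2 fun ε hε => ?_).continuous, htail⟩
  obtain ⟨k, hk⟩ := exists_pow_lt_of_lt_one (div_pos hε (by norm_num : (0 : ℝ) < 5))
    (by norm_num : (1 / 2 : ℝ) < 1)
  refine ⟨1 / N k, by have := hN k; positivity, fun s t hst => ?_⟩
  have hgst : dist (g k s) (g k t) ≤ (1 / 2) ^ k :=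
    dist_apply_floor_le (hN k) (by positivity) (hstep k) s.2 t.2 hst
  calc dist (f s) (f t) ≤ dist (f s) (g k s) + dist (g k s) (g k t) + dist (g k t) (f t) :=
        dist_triangle4 _ _ _ _
    _ ≤ 2 * (1 / 2) ^ k + (1 / 2) ^ k + 2 * (1 / 2) ^ k := by
        gcongr
        · rw [dist_comm]; exact htail k s
        · exact htail k t
    _ < ε := by linarith

end Limit

theorem exists_continuous_surjective_of_locallyConnectedSpace (M : Type*) [MetricSpace M]
    [Nonempty M] [CompactSpace M] [ConnectedSpace M] [LocallyConnectedSpace M] :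
    ∃ f : Icc (0 : ℝ) 1 → M, Continuous f ∧ Function.Surjective f := by
  choose δ hδ hδle hchain using fun k : ℕ =>
    exists_isEpsChain_closedBall (M := M) (pow_pos (by norm_num : (0 : ℝ) < 1 / 2) k)
  obtain ⟨N, m, p, hp⟩ := exists_refining_stages hδ hchain
  obtain ⟨f, hf, hfp⟩ := exists_continuous_of_refining (fun k => (hp k).1.pos) (fun k => (hp k).2.1)
    (fun k j _ => ((hp k).1.dist_lt j).le.trans (hδle k)) (fun k => (hp k).2.2)
  refine ⟨f, hf, Set.range_eq_univ.1 ?_⟩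
  rw [← (isCompact_range hf).isClosed.closure_eq]
  refine DenseRange.closure_range (Metric.denseRange_iff.2 fun y ε hε => ?_)
  obtain ⟨k, hk⟩ := exists_pow_lt_of_lt_one (div_pos hε (by norm_num : (0 : ℝ) < 3))
    (by norm_num : (1 / 2 : ℝ) < 1)
  obtain ⟨j, hj, hyj⟩ := (hp k).1.dense y
  have hNk : (0 : ℝ) < N k := Nat.cast_pos.2 (hp k).1.pos
  have ht : (j : ℝ) / N k ∈ Icc (0 : ℝ) 1 :=
    ⟨by positivity, (div_le_one hNk).2 (by exact_mod_cast hj.le)⟩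
  refine ⟨⟨_, ht⟩, ?_⟩
  have := hfp k ⟨_, ht⟩
  rw [div_mul_cancel₀ _ hNk.ne', Nat.floor_natCast] at this
  have hδk : δ (k + 1) ≤ (1 / 2) ^ k :=
    (hδle (k + 1)).trans (pow_le_pow_of_le_one (by norm_num) (by norm_num) k.le_succ)
  calc dist y (f ⟨_, ht⟩) ≤ dist y (p k j) + dist (p k j) (f ⟨_, ht⟩) := dist_triangle _ _ _
    _ < 3 * (1 / 2) ^ k := by linarith
    _ < ε := by linarith

lemma secondCountableTopology_of_continuous_surjective {X Y : Type*} [TopologicalSpace X]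
    [TopologicalSpace Y] [SecondCountableTopology X] [CompactSpace X] [T2Space Y] {f : X → Y}
    (hf : Continuous f) (hsurj : Function.Surjective f) : SecondCountableTopology Y := by
  obtain ⟨B, hBc, -, hB⟩ := TopologicalSpace.exists_countable_basis X
  -- `(f '' (⋃₀ S)ᶜ)ᶜ` is the set of points whose fibre is covered by `S`
  set V : Set (Set X) → Set Y := fun S => (f '' (⋃₀ S)ᶜ)ᶜ
  refine TopologicalSpace.IsTopologicalBasis.secondCountableTopology
    (b := V '' {S | S.Finite ∧ S ⊆ B}) ?_ ((countable_ofPred_finite_subset hBc).image V)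
  refine TopologicalSpace.isTopologicalBasis_of_isOpen_of_nhds ?_ fun y U hyU hU => ?_
  · rintro _ ⟨S, ⟨-, hSB⟩, rfl⟩
    exact (hf.isClosedMap _
      (isOpen_sUnion fun s hs => hB.isOpen (hSB hs)).isClosed_compl).isOpen_compl
  obtain ⟨W, hWB, hW⟩ := hB.open_eq_sUnion (hU.preimage hf)
  have hfiber : f ⁻¹' {y} ⊆ ⋃ w ∈ W, w := by
    rw [← sUnion_eq_biUnion, ← hW]
    exact fun x hx => by rw [mem_preimage, mem_singleton_iff.1 hx]; exact hyU
  obtain ⟨S, hSW, hSfin, hS⟩ :=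
    (isClosed_singleton.preimage hf).isCompact.elim_finite_subcover_image
      (fun w hw => hB.isOpen (hWB hw)) hfiber
  refine ⟨V S, ⟨S, ⟨hSfin, hSW.trans hWB⟩, rfl⟩, ?_, ?_⟩
  · rintro ⟨x, hx, rfl⟩
    exact hx (sUnion_eq_biUnion ▸ hS rfl)
  · intro z hz
    obtain ⟨x, rfl⟩ := hsurj z
    by_contra hxU
    refine hz ⟨x, fun hx => hxU ?_, rfl⟩
    have : x ∈ ⋃₀ W := sUnion_subset_sUnion hSW hx
    rwa [← hW] at this

/-- Hahn–Mazurkiewicz–Sierpiński theorem: a nonempty compact connected locally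
connected metric space is a continuous image of `[0,1]`; conversely, any Hausdorff
continuous image of `[0,1]` is a compact, connected, locally connected metrizable space. -/
theorem hahn_mazurkiewicz_sierpinski :
    (∀ (M : Type) [MetricSpace M], Nonempty M → CompactSpace M → ConnectedSpace M →
      LocallyConnectedSpace M →
      ∃ f : Set.Icc (0 : ℝ) 1 → M, Continuous f ∧ Function.Surjective f) ∧
    (∀ (Y : Type) [TopologicalSpace Y] [T2Space Y] (f : Set.Icc (0 : ℝ) 1 → Y),
      Continuous f → Function.Surjective f →
      CompactSpace Y ∧ ConnectedSpace Y ∧ LocallyConnectedSpace Y ∧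
        TopologicalSpace.MetrizableSpace Y) := by
  refine ⟨fun M _ _ _ _ _ => exists_continuous_surjective_of_locallyConnectedSpace M,
    fun Y _ _ f hf hsurj => ?_⟩
  have hcompact : CompactSpace Y := hsurj.compactSpace hf
  have : SecondCountableTopology Y := secondCountableTopology_of_continuous_surjective hf hsurj
  have : LocallyPathConnectedSpace (Icc (0 : ℝ) 1) := (convex_Icc 0 1).locallyPathConnectedSpace
  exact ⟨hcompact, hsurj.connectedSpace hf,
    (hf.isClosedMap.isQuotientMap hf hsurj).isCoinducing.locallyConnectedSpace, inferInstance⟩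
end

section
/- There exist compact, connected, locally connected sets X, Y ⊂ ℝ² such that X ∩ Y is compact and connected but not locally connected. -/
/-!
The examples are combs in `[0,1]²`: teeth `{t} × [0,1]` over `t ∈ {0} ∪ {2⁻ᵏ}`, and, across the
column `[2⁻⁽ᵏ⁺¹⁾, 2⁻ᵏ]` between consecutive teeth, horizontal bridges at finitely many heights
`H k`. When the heights of column `k` form a `2⁻ᵏ`-net of `[0,1]`, the teeth close to a point of
the limit tooth `{0} × [0,1]` are joined by short bridges, so the comb is a Peano continuum; this
holds for dyadic heights `j/2ᵏ` and for triadic heights `j/3ᵏ`. Since `j/2ᵏ = i/3ᵏ` only at `0`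
and `1`, the two combs meet in the comb with only a bottom and a top bar, whose teeth cannot be
joined near `(0, 1/2)`.
-/

open Set Metric Filter Topology

lemma joinedIn_of_convex_subset {E : Type*} [AddCommGroup E] [Module ℝ E] [TopologicalSpace E]
    [ContinuousAdd E] [ContinuousSMul ℝ E] {C F : Set E} {x y : E} (hC : Convex ℝ C)
    (hCF : C ⊆ F) (hx : x ∈ C) (hy : y ∈ C) : JoinedIn F x y :=
  ((hC.isPathConnected ⟨x, hx⟩).joinedIn x hx y hy).mono hCF

lemma locallyConnectedSpace_of_isPreconnected_inter_closedBall {X : Type*} [PseudoMetricSpace X]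
    {S : Set X} (h : ∀ p ∈ S, ∀ ε > 0, ∃ r ∈ Ioo 0 ε, IsPreconnected (S ∩ closedBall p r)) :
    LocallyConnectedSpace S := by
  rw [locallyConnectedSpace_iff_connected_subsets]
  rintro ⟨p, hp⟩ U hU
  obtain ⟨ε, hε, hεU⟩ := Metric.mem_nhds_iff.1 hU
  obtain ⟨r, ⟨hr, hrε⟩, hpre⟩ := h p hp ε hε
  have hball : closedBall (⟨p, hp⟩ : S) r = Subtype.val ⁻¹' closedBall p r := rfl
  refine ⟨closedBall ⟨p, hp⟩ r, closedBall_mem_nhds _ hr, ?_,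
    (closedBall_subset_ball hrε).trans hεU⟩
  rwa [← Topology.IsInducing.subtypeVal.isPreconnected_image, hball,
    Subtype.image_preimage_coe]

lemma Prod.mem_closedBall_iff_abs {p q : ℝ × ℝ} {r : ℝ} :
    q ∈ closedBall p r ↔ |q.1 - p.1| ≤ r ∧ |q.2 - p.2| ≤ r := by
  simp only [mem_closedBall, Prod.dist_eq, max_le_iff, Real.dist_eq]

namespace Comb

noncomputable def tooth (k : ℕ) : ℝ := 2⁻¹ ^ k

def teeth : Set ℝ := insert 0 (range tooth)

def column (k : ℕ) : Set ℝ := Icc (tooth (k + 1)) (tooth k)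

def comb (H : ℕ → Set ℝ) : Set (ℝ × ℝ) := teeth ×ˢ Icc 0 1 ∪ ⋃ k, column k ×ˢ H k

lemma tooth_pos (k : ℕ) : 0 < tooth k := by unfold tooth; positivity

lemma strictAnti_tooth : StrictAnti tooth := pow_right_strictAnti₀ (by norm_num) (by norm_num)

lemma tooth_lt_tooth {i j : ℕ} : tooth i < tooth j ↔ j < i := strictAnti_tooth.lt_iff_gt

lemma tooth_le_tooth {i j : ℕ} : tooth i ≤ tooth j ↔ j ≤ i := strictAnti_tooth.le_iff_ge

lemma tooth_succ (k : ℕ) : tooth (k + 1) = tooth k / 2 := by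
  rw [tooth, tooth, pow_succ, div_eq_mul_inv]

lemma tooth_le_one (k : ℕ) : tooth k ≤ 1 := by
  simpa [tooth] using tooth_le_tooth.2 (Nat.zero_le k)

lemma tendsto_tooth : Tendsto tooth atTop (𝓝 0) :=
  tendsto_pow_atTop_nhds_zero_of_lt_one (by norm_num) (by norm_num)

lemma zero_mem_teeth : (0 : ℝ) ∈ teeth := mem_insert _ _

lemma tooth_mem_teeth (k : ℕ) : tooth k ∈ teeth := mem_insert_of_mem _ ⟨k, rfl⟩

lemma teeth_subset_Icc : teeth ⊆ Icc 0 1 := by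
  rintro _ (rfl | ⟨k, rfl⟩)
  · exact ⟨le_rfl, zero_le_one⟩
  · exact ⟨(tooth_pos k).le, tooth_le_one k⟩

lemma left_mem_column (k : ℕ) : tooth (k + 1) ∈ column k :=
  left_mem_Icc.2 (tooth_le_tooth.2 k.le_succ)

lemma right_mem_column (k : ℕ) : tooth k ∈ column k :=
  right_mem_Icc.2 (tooth_le_tooth.2 k.le_succ)

lemma column_subset_Icc (k : ℕ) : column k ⊆ Icc 0 1 := fun _ hx =>
  ⟨(tooth_pos _).le.trans hx.1, hx.2.trans (tooth_le_one k)⟩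

lemma not_mem_teeth_of_mem_Ioo {x : ℝ} {k : ℕ} (hx : x ∈ Ioo (tooth (k + 1)) (tooth k)) :
    x ∉ teeth := by
  rintro (rfl | ⟨i, rfl⟩)
  · exact (tooth_pos _).not_gt hx.1
  · have := tooth_lt_tooth.1 hx.1
    have := tooth_lt_tooth.1 hx.2
    omega

lemma mem_Ioo_of_mem_column {x : ℝ} {k : ℕ} (hx : x ∈ column k) (ht : x ∉ teeth) :
    x ∈ Ioo (tooth (k + 1)) (tooth k) :=
  ⟨hx.1.lt_of_ne fun h => ht (h ▸ tooth_mem_teeth _),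
    hx.2.lt_of_ne fun h => ht (h ▸ tooth_mem_teeth _)⟩

lemma eq_of_mem_column_of_mem_Ioo {x : ℝ} {j k : ℕ} (hj : x ∈ column j)
    (hk : x ∈ Ioo (tooth (k + 1)) (tooth k)) : j = k := by
  have := tooth_lt_tooth.1 (hk.1.trans_le hj.2)
  have := tooth_lt_tooth.1 (hj.1.trans_lt hk.2)
  omega

lemma exists_mem_Ioc {x : ℝ} (hx₀ : 0 < x) (hx₁ : x ≤ 1) :
    ∃ k, x ∈ Ioc (tooth (k + 1)) (tooth k) :=
  exists_nat_pow_near_of_lt_one hx₀ hx₁ (by norm_num) (by norm_num)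

lemma exists_mem_Ioo_of_not_mem_teeth {x : ℝ} (hx : x ∈ Icc 0 1) (ht : x ∉ teeth) :
    ∃ k, x ∈ Ioo (tooth (k + 1)) (tooth k) := by
  have hx₀ : 0 < x := hx.1.lt_of_ne fun h => ht (h ▸ zero_mem_teeth)
  obtain ⟨k, hk⟩ := exists_mem_Ioc hx₀ hx.2
  exact ⟨k, mem_Ioo_of_mem_column (Ioc_subset_Icc_self hk) ht⟩

lemma eq_tooth_of_mem_teeth {x : ℝ} {k : ℕ} (hx : x ∈ teeth) (h : |x - tooth k| < tooth (k + 1)) :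
    x = tooth k := by
  obtain ⟨h₁, h₂⟩ := abs_lt.1 h
  have hk := tooth_succ k
  rcases hx with rfl | ⟨i, rfl⟩
  · linarith [tooth_pos (k + 1)]
  · have hik : i < k + 1 := tooth_lt_tooth.1 (by linarith)
    obtain hik | rfl := (Nat.lt_succ_iff.1 hik).lt_or_eq
    · linarith [tooth_succ i, tooth_le_tooth.2 hik]
    · rfl

lemma tooth_mem_column {x : ℝ} {j k : ℕ} (hx : x ∈ column j) (h : |x - tooth k| < tooth (k + 1)) :
    tooth k ∈ column j := by
  obtain ⟨h₁, h₂⟩ := abs_lt.1 h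
  have hk := tooth_succ k
  have hjk : j < k + 1 := tooth_lt_tooth.1 (by linarith [hx.2])
  refine ⟨tooth_le_tooth.2 ?_, tooth_le_tooth.2 (Nat.lt_succ_iff.1 hjk)⟩
  by_contra! hkj
  have : tooth (k + 1) ≤ tooth (j + 3) := tooth_le_tooth.2 (by omega)
  linarith [hx.1, tooth_succ (j + 1), tooth_succ (j + 2), tooth_pos (k + 1)]

variable {H H' : ℕ → Set ℝ}

lemma comb_mono (h : ∀ k, H k ⊆ H' k) : comb H ⊆ comb H' :=
  union_subset_union_right _ (iUnion_mono fun k => prod_mono_right (h k))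

lemma comb_subset (hH : ∀ k, H k ⊆ Icc 0 1) : comb H ⊆ Icc 0 1 ×ˢ Icc 0 1 :=
  union_subset (prod_mono_left teeth_subset_Icc)
    (iUnion_subset fun k => prod_mono (column_subset_Icc k) (hH k))

lemma mem_of_mem_comb_of_mem_Ioo {x y : ℝ} {k : ℕ} (hp : (x, y) ∈ comb H)
    (hx : x ∈ Ioo (tooth (k + 1)) (tooth k)) : y ∈ H k := by
  rcases hp with ⟨ht, -⟩ | hp
  · exact absurd ht (not_mem_teeth_of_mem_Ioo hx)
  · obtain ⟨j, hj, hy⟩ := mem_iUnion.1 hp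
    rwa [eq_of_mem_column_of_mem_Ioo hj hx] at hy

lemma comb_inter (hH : ∀ k, H k ⊆ Icc 0 1) :
    comb H ∩ comb H' = comb fun k => H k ∩ H' k := by
  refine Subset.antisymm ?_ (subset_inter (comb_mono fun k => inter_subset_left)
    (comb_mono fun k => inter_subset_right))
  rintro ⟨x, y⟩ ⟨hp, hp'⟩
  have hxy := comb_subset hH hp
  by_cases hx : x ∈ teeth
  · exact Or.inl ⟨hx, hxy.2⟩
  · obtain ⟨k, hk⟩ := exists_mem_Ioo_of_not_mem_teeth hxy.1 hx
    exact Or.inr (mem_iUnion.2 ⟨k, Ioo_subset_Icc_self hk,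
      mem_of_mem_comb_of_mem_Ioo hp hk, mem_of_mem_comb_of_mem_Ioo hp' hk⟩)

lemma isClosed_comb (hH : ∀ k, H k ⊆ Icc 0 1) (hfin : ∀ k, (H k).Finite) :
    IsClosed (comb H) := by
  refine isClosed_of_closure_subset fun p hp => ?_
  have hpI : p ∈ Icc 0 1 ×ˢ Icc 0 1 :=
    closure_minimal (comb_subset hH) (isClosed_Icc.prod isClosed_Icc) hp
  by_cases hx : p.1 ∈ teeth
  · exact Or.inl ⟨hx, hpI.2⟩
  obtain ⟨k, hk⟩ := exists_mem_Ioo_of_not_mem_teeth hpI.1 hx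
  -- near `p` the comb is the closed set `column k ×ˢ H k`
  have hbridge : Ioo (tooth (k + 1)) (tooth k) ×ˢ univ ∩ comb H ⊆ column k ×ˢ H k :=
    fun q ⟨⟨hq, _⟩, hqc⟩ => ⟨Ioo_subset_Icc_self hq, mem_of_mem_comb_of_mem_Ioo hqc hq⟩
  have hclosed : IsClosed (column k ×ˢ H k) := isClosed_Icc.prod (hfin k).isClosed
  have := (isOpen_Ioo.prod isOpen_univ).inter_closure ⟨⟨hk, mem_univ _⟩, hp⟩
  exact Or.inr (mem_iUnion.2 ⟨k, hclosed.closure_subset_iff.2 hbridge this⟩)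

lemma isCompact_comb (hH : ∀ k, H k ⊆ Icc 0 1) (hfin : ∀ k, (H k).Finite) :
    IsCompact (comb H) :=
  (isCompact_Icc.prod isCompact_Icc).of_isClosed_subset (isClosed_comb hH hfin) (comb_subset hH)

lemma joinedIn_vertical {K : Set (ℝ × ℝ)} (hK : Convex ℝ K) {x y₁ y₂ : ℝ} (hx : x ∈ teeth)
    (hy₁ : y₁ ∈ Icc 0 1) (hy₂ : y₂ ∈ Icc 0 1) (h₁ : (x, y₁) ∈ K) (h₂ : (x, y₂) ∈ K) :
    JoinedIn (comb H ∩ K) (x, y₁) (x, y₂) :=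
  joinedIn_of_convex_subset (((convex_singleton x).prod (convex_Icc 0 1)).inter hK)
    (inter_subset_inter_left _ fun _ ⟨hq₁, hq₂⟩ => Or.inl ⟨(mem_singleton_iff.1 hq₁) ▸ hx, hq₂⟩)
    ⟨⟨rfl, hy₁⟩, h₁⟩ ⟨⟨rfl, hy₂⟩, h₂⟩

lemma joinedIn_horizontal {K : Set (ℝ × ℝ)} (hK : Convex ℝ K) {x₁ x₂ y : ℝ} {k : ℕ}
    (hy : y ∈ H k) (hx₁ : x₁ ∈ column k) (hx₂ : x₂ ∈ column k) (h₁ : (x₁, y) ∈ K)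
    (h₂ : (x₂, y) ∈ K) : JoinedIn (comb H ∩ K) (x₁, y) (x₂, y) :=
  joinedIn_of_convex_subset (((convex_Icc _ _).prod (convex_singleton y)).inter hK)
    (inter_subset_inter_left _ fun _ ⟨hq₁, hq₂⟩ =>
      Or.inr (mem_iUnion.2 ⟨k, hq₁, (mem_singleton_iff.1 hq₂) ▸ hy⟩))
    ⟨⟨hx₁, rfl⟩, h₁⟩ ⟨⟨hx₂, rfl⟩, h₂⟩

lemma isPathConnected_comb (hH : ∀ k, H k ⊆ Icc 0 1) (h₀ : ∀ k, 0 ∈ H k) :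
    IsPathConnected (comb H) := by
  have hbase : Icc 0 1 ×ˢ {0} ⊆ comb H := by
    rintro ⟨x, _⟩ ⟨hx, rfl⟩
    by_cases ht : x ∈ teeth
    · exact Or.inl ⟨ht, left_mem_Icc.2 zero_le_one⟩
    · obtain ⟨k, hk⟩ := exists_mem_Ioo_of_not_mem_teeth hx ht
      exact Or.inr (mem_iUnion.2 ⟨k, Ioo_subset_Icc_self hk, h₀ k⟩)
  have hI : (0 : ℝ) ∈ Icc 0 1 := left_mem_Icc.2 zero_le_one
  have joined_base : ∀ x ∈ Icc (0 : ℝ) 1, JoinedIn (comb H) (x, 0) (0, 0) := fun x hx =>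
    joinedIn_of_convex_subset ((convex_Icc 0 1).prod (convex_singleton 0)) hbase ⟨hx, rfl⟩
      ⟨hI, rfl⟩
  refine ⟨(0, 0), hbase ⟨hI, rfl⟩, ?_⟩
  rintro ⟨x, y⟩ hp
  have hy := (comb_subset hH hp).2
  rcases hp with ⟨hx, -⟩ | hp
  · exact (joined_base x (teeth_subset_Icc hx)).symm.trans
      ((joinedIn_vertical convex_univ hx hI hy trivial trivial).mono inter_subset_left)
  · obtain ⟨k, hx, hyk⟩ := mem_iUnion.1 hp
    exact (joined_base _ (teeth_subset_Icc (tooth_mem_teeth k))).symm.trans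
      (((joinedIn_vertical convex_univ (tooth_mem_teeth k) hI hy trivial trivial).trans
      (joinedIn_horizontal convex_univ hyk (right_mem_column k) hx trivial trivial)).mono
        inter_subset_left)

lemma isPathConnected_comb_inter_column_prod (hH : ∀ k, H k ⊆ Icc 0 1) {B : Set ℝ}
    (hB : Convex ℝ B) {k : ℕ} {h : ℝ} (hh : h ∈ H k) (hhB : h ∈ B) :
    IsPathConnected (comb H ∩ column k ×ˢ B) := by
  have hK : Convex ℝ (column k ×ˢ B) := (convex_Icc _ _).prod hB
  have hhI := hH k hh
  refine ⟨(tooth k, h), ⟨Or.inl ⟨tooth_mem_teeth k, hhI⟩, right_mem_column k, hhB⟩, ?_⟩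
  rintro ⟨x, y⟩ ⟨hp, hx, hy⟩
  have hyI := (comb_subset hH hp).2
  by_cases hxt : x ∈ teeth
  · exact (joinedIn_horizontal hK hh (right_mem_column k) hx ⟨right_mem_column k, hhB⟩
      ⟨hx, hhB⟩).trans (joinedIn_vertical hK hxt hhI hyI ⟨hx, hhB⟩ ⟨hx, hy⟩)
  · have hyk := mem_of_mem_comb_of_mem_Ioo hp (mem_Ioo_of_mem_column hx hxt)
    exact (joinedIn_vertical hK (tooth_mem_teeth k) hhI hyI ⟨right_mem_column k, hhB⟩
      ⟨right_mem_column k, hy⟩).trans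
      (joinedIn_horizontal hK hyk (right_mem_column k) hx ⟨right_mem_column k, hy⟩ ⟨hx, hy⟩)

/-- The mesh condition puts a bridge close to height `y₀` in every column, which chains the teeth
near `(0, y₀)`; the limit tooth lies in the closure of the others. -/
lemma isPreconnected_comb_inter_closedBall_zero (hH : ∀ k, H k ⊆ Icc 0 1)
    (hmesh : ∀ k, ∀ y ∈ Icc (0 : ℝ) 1, ∃ h ∈ H k, |h - y| ≤ tooth k) {y₀ : ℝ}
    (hy₀ : y₀ ∈ Icc 0 1) (m : ℕ) :
    IsPreconnected (comb H ∩ closedBall (0, y₀) (tooth m)) := by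
  set B := Icc (y₀ - tooth m) (y₀ + tooth m)
  have hball : closedBall ((0 : ℝ), y₀) (tooth m) = Icc (-tooth m) (tooth m) ×ˢ B := by
    rw [← closedBall_prod_same, Real.closedBall_eq_Icc, Real.closedBall_eq_Icc, zero_sub,
      zero_add]
  have hstrip : ∀ k, IsPathConnected (comb H ∩ column (k + m) ×ˢ B) := fun k => by
    obtain ⟨h, hh, hhy⟩ := hmesh (k + m) y₀ hy₀
    have : tooth (k + m) ≤ tooth m := tooth_le_tooth.2 (Nat.le_add_left m k)
    exact isPathConnected_comb_inter_column_prod hH (convex_Icc _ _) hh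
      ⟨by linarith [(abs_le.1 hhy).1], by linarith [(abs_le.1 hhy).2]⟩
  have hy₀B : y₀ ∈ B := ⟨by linarith [tooth_pos m], by linarith [tooth_pos m]⟩
  have hchain : IsPreconnected (⋃ k, comb H ∩ column (k + m) ×ˢ B) := by
    refine IsPreconnected.iUnion_of_chain (fun k => (hstrip k).isConnected.isPreconnected)
      fun k => ⟨(tooth (k + m + 1), y₀), ⟨Or.inl ⟨tooth_mem_teeth _, hy₀⟩,
        left_mem_column _, hy₀B⟩, ⟨Or.inl ⟨tooth_mem_teeth _, hy₀⟩, ?_, hy₀B⟩⟩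
    rw [Order.succ_eq_add_one, add_right_comm]
    exact right_mem_column _
  refine hchain.subset_closure (iUnion_subset fun k => inter_subset_inter_right _ ?_) ?_
  · rw [hball]
    refine prod_mono (fun x hx => ⟨?_, hx.2.trans (tooth_le_tooth.2 (Nat.le_add_left m k))⟩)
      le_rfl
    linarith [(column_subset_Icc _ hx).1, tooth_pos m]
  rintro ⟨x, y⟩ ⟨hp, hpB⟩
  rw [hball] at hpB
  have hxy := comb_subset hH hp
  rcases hxy.1.1.eq_or_lt with rfl | hx₀
  · refine mem_closure_of_tendsto ((tendsto_tooth.comp (tendsto_add_atTop_nat m)).prodMk_nhds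
      tendsto_const_nhds) (Eventually.of_forall fun k => mem_iUnion.2 ⟨k, ?_⟩)
    exact ⟨Or.inl ⟨tooth_mem_teeth _, hxy.2⟩, right_mem_column _, hpB.2⟩
  · obtain ⟨k, hk⟩ := exists_mem_Ioc hx₀ hxy.1.2
    obtain ⟨j, rfl⟩ : ∃ j, k = j + m :=
      ⟨k - m, by have := tooth_lt_tooth.1 (hk.1.trans_le hpB.1.2); omega⟩
    exact subset_closure (mem_iUnion.2 ⟨j, hp, Ioc_subset_Icc_self hk, hpB.2⟩)

lemma isPathConnected_comb_inter_closedBall_tooth (hH : ∀ k, H k ⊆ Icc 0 1) {k : ℕ}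
    {y₀ r : ℝ} (hy₀ : y₀ ∈ Icc 0 1) (hr : 0 ≤ r) (hrk : r < tooth (k + 1)) :
    IsPathConnected (comb H ∩ closedBall (tooth k, y₀) r) := by
  have hK := convex_closedBall (tooth k, y₀) r
  have hcenter := mem_closedBall_self (x := (tooth k, y₀)) hr
  refine ⟨(tooth k, y₀), ⟨Or.inl ⟨tooth_mem_teeth k, hy₀⟩, hcenter⟩, ?_⟩
  rintro ⟨x, y⟩ ⟨hp, hpr⟩
  have hyI := (comb_subset hH hp).2
  obtain ⟨hx, hy⟩ := Prod.mem_closedBall_iff_abs.1 hpr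
  have hcorner : (tooth k, y) ∈ closedBall (tooth k, y₀) r :=
    Prod.mem_closedBall_iff_abs.2 ⟨by simpa using hr, hy⟩
  rcases hp with ⟨hxt, -⟩ | hp
  · obtain rfl := eq_tooth_of_mem_teeth hxt (hx.trans_lt hrk)
    exact joinedIn_vertical hK hxt hy₀ hyI hcenter hpr
  · obtain ⟨j, hxj, hyj⟩ := mem_iUnion.1 hp
    exact (joinedIn_vertical hK (tooth_mem_teeth k) hy₀ hyI hcenter hcorner).trans
      (joinedIn_horizontal hK hyj (tooth_mem_column hxj (hx.trans_lt hrk)) hxj hcorner hpr)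

lemma isPathConnected_comb_inter_closedBall_bridge {k : ℕ} {x₀ y₀ r : ℝ} (hy₀ : y₀ ∈ H k)
    (hr : 0 ≤ r)
    (hball : closedBall (x₀, y₀) r ⊆ Ioo (tooth (k + 1)) (tooth k) ×ˢ (H k \ {y₀})ᶜ) :
    IsPathConnected (comb H ∩ closedBall (x₀, y₀) r) := by
  have hcenter := mem_closedBall_self (x := (x₀, y₀)) hr
  have hx₀ := Ioo_subset_Icc_self (hball hcenter).1
  refine ⟨(x₀, y₀), ⟨Or.inr (mem_iUnion.2 ⟨k, hx₀, hy₀⟩), hcenter⟩, ?_⟩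
  rintro ⟨x, y⟩ ⟨hp, hpr⟩
  obtain ⟨hx, hy⟩ := hball hpr
  obtain rfl : y = y₀ := by
    by_contra hne
    exact hy ⟨mem_of_mem_comb_of_mem_Ioo hp hx, hne⟩
  exact joinedIn_horizontal (convex_closedBall _ _) hy₀ hx₀ (Ioo_subset_Icc_self hx) hcenter hpr

lemma exists_isPreconnected_comb_inter_closedBall (hH : ∀ k, H k ⊆ Icc 0 1)
    (hfin : ∀ k, (H k).Finite) (hmesh : ∀ k, ∀ y ∈ Icc (0 : ℝ) 1, ∃ h ∈ H k, |h - y| ≤ tooth k)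
    {p : ℝ × ℝ} (hp : p ∈ comb H) {ε : ℝ} (hε : 0 < ε) :
    ∃ r ∈ Ioo 0 ε, IsPreconnected (comb H ∩ closedBall p r) := by
  obtain ⟨x, y⟩ := p
  have hxy := comb_subset hH hp
  by_cases hx : x ∈ teeth
  · rcases hx with rfl | ⟨k, rfl⟩
    · obtain ⟨m, hm⟩ := (tendsto_tooth.eventually (gt_mem_nhds hε)).exists
      exact ⟨tooth m, ⟨tooth_pos m, hm⟩,
        isPreconnected_comb_inter_closedBall_zero hH hmesh hxy.2 m⟩
    · have hk := tooth_pos (k + 1)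
      refine ⟨min (ε / 2) (tooth (k + 1) / 2), ⟨by positivity, by simp [hε]⟩, ?_⟩
      exact (isPathConnected_comb_inter_closedBall_tooth hH hxy.2 (by positivity)
        ((min_le_right _ _).trans_lt (half_lt_self hk))).isConnected.isPreconnected
  · obtain ⟨k, hk⟩ := exists_mem_Ioo_of_not_mem_teeth hxy.1 hx
    have hy := mem_of_mem_comb_of_mem_Ioo hp hk
    have hU : Ioo (tooth (k + 1)) (tooth k) ×ˢ (H k \ {y})ᶜ ∈ 𝓝 (x, y) :=
      prod_mem_nhds (isOpen_Ioo.mem_nhds hk)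
        ((hfin k).sdiff.isClosed.isOpen_compl.mem_nhds fun h => h.2 rfl)
    obtain ⟨δ, hδ, hδU⟩ := nhds_basis_closedBall.mem_iff.1 hU
    refine ⟨min (ε / 2) δ, ⟨by positivity, by simp [hε]⟩, ?_⟩
    exact (isPathConnected_comb_inter_closedBall_bridge hy (by positivity)
      ((closedBall_subset_closedBall (min_le_right _ _)).trans hδU)).isConnected.isPreconnected

lemma locallyConnectedSpace_comb (hH : ∀ k, H k ⊆ Icc 0 1) (hfin : ∀ k, (H k).Finite)
    (hmesh : ∀ k, ∀ y ∈ Icc (0 : ℝ) 1, ∃ h ∈ H k, |h - y| ≤ tooth k) :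
    LocallyConnectedSpace (comb H) :=
  locallyConnectedSpace_of_isPreconnected_inter_closedBall fun _ hp _ hε =>
    exists_isPreconnected_comb_inter_closedBall hH hfin hmesh hp hε

lemma not_locallyConnectedSpace_comb {a b : ℝ} (hab : a < b) (ha : 0 ≤ a) (hb : b ≤ 1)
    (hgap : ∀ k, Disjoint (H k) (Ioo a b)) : ¬ LocallyConnectedSpace (comb H) := by
  intro hlc
  set c := (a + b) / 2 with hc
  have hmem : ∀ t ∈ teeth, (t, c) ∈ comb H := fun t ht =>
    Or.inl ⟨ht, by constructor <;> linarith⟩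
  let p : comb H := ⟨(0, c), hmem 0 zero_mem_teeth⟩
  have hU : Subtype.val ⁻¹' ball (0, c) ((b - a) / 2) ∈ 𝓝 p :=
    continuous_subtype_val.continuousAt.preimage_mem_nhds (ball_mem_nhds _ (by linarith))
  obtain ⟨V, hV, hVpre, hVU⟩ := locallyConnectedSpace_iff_connected_subsets.1 hlc p _ hU
  obtain ⟨ε, hε, hεV⟩ := Metric.mem_nhds_iff.1 hV
  obtain ⟨k, hk⟩ := (tendsto_tooth.eventually (gt_mem_nhds hε)).exists
  have hq : (⟨(tooth k, c), hmem _ (tooth_mem_teeth k)⟩ : comb H) ∈ V := hεV <| by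
    show dist (tooth k, c) (0, c) < ε
    simpa [Prod.dist_eq, abs_of_pos (tooth_pos k), hε] using hk
  -- `V` projects onto an interval containing `0` and `tooth k`, so it meets the open column `k`
  have hIcc : Icc 0 (tooth k) ⊆ (fun z : comb H => z.1.1) '' V :=
    (hVpre.image _ (continuous_fst.comp continuous_subtype_val).continuousOn).Icc_subset
      ⟨p, mem_of_mem_nhds hV, rfl⟩ ⟨_, hq, rfl⟩
  have hmid : (tooth (k + 1) + tooth k) / 2 ∈ Ioo (tooth (k + 1)) (tooth k) := by
    have := tooth_lt_tooth.2 k.lt_succ_self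
    constructor <;> linarith
  obtain ⟨⟨⟨x, y⟩, hz⟩, hzV, rfl⟩ := hIcc ⟨by linarith [hmid.1, tooth_pos (k + 1)], hmid.2.le⟩
  have hyc : |y - c| < (b - a) / 2 := by
    have := hVU hzV
    simp only [mem_preimage, mem_ball, Prod.dist_eq, Real.dist_eq, max_lt_iff] at this
    exact this.2
  obtain ⟨h₁, h₂⟩ := abs_lt.1 hyc
  exact disjoint_left.1 (hgap k) (mem_of_mem_comb_of_mem_Ioo hz hmid)
    ⟨by linarith, by linarith⟩

def heights (n k : ℕ) : Set ℝ := (fun j : ℕ => (j : ℝ) / (n : ℝ) ^ k) '' Iic (n ^ k)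

lemma heights_subset_Icc (n k : ℕ) : heights n k ⊆ Icc 0 1 := by
  rintro _ ⟨j, hj, rfl⟩
  exact ⟨by positivity, div_le_one_of_le₀ (by exact_mod_cast hj) (by positivity)⟩

lemma finite_heights (n k : ℕ) : (heights n k).Finite := (finite_Iic _).image _

lemma zero_mem_heights (n k : ℕ) : (0 : ℝ) ∈ heights n k := ⟨0, Nat.zero_le _, by simp⟩

lemma exists_mem_heights_abs_sub_le {n : ℕ} (hn : 2 ≤ n) (k : ℕ) {y : ℝ} (hy : y ∈ Icc 0 1) :
    ∃ h ∈ heights n k, |h - y| ≤ tooth k := by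
  set N : ℝ := (n : ℝ) ^ k
  have hN : 0 < N := by positivity
  have hyN : 0 ≤ y * N := mul_nonneg hy.1 hN.le
  have hfloor : ⌊y * N⌋₊ ≤ n ^ k :=
    Nat.floor_le_of_le (by push_cast; nlinarith [hy.2])
  refine ⟨⌊y * N⌋₊ / N, ⟨_, hfloor, rfl⟩, ?_⟩
  have hNk : N⁻¹ ≤ tooth k := by
    rw [tooth, inv_pow]
    exact inv_anti₀ (by positivity) (pow_le_pow_left₀ (by norm_num) (by exact_mod_cast hn) k)
  have h₁ := Nat.floor_le hyN
  have h₂ := Nat.lt_floor_add_one (y * N)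
  have hsub : (⌊y * N⌋₊ : ℝ) / N - y = (⌊y * N⌋₊ - y * N) * N⁻¹ := by field_simp
  calc |(⌊y * N⌋₊ : ℝ) / N - y| ≤ 1 * N⁻¹ := by
        rw [hsub, abs_mul, abs_of_pos (inv_pos.2 hN)]
        exact mul_le_mul_of_nonneg_right (abs_le.2 ⟨by linarith, by linarith⟩) (by positivity)
    _ ≤ tooth k := by rwa [one_mul]

lemma disjoint_heights_inter_Ioo {m n : ℕ} (hmn : m.Coprime n) (k : ℕ) :
    Disjoint (heights m k ∩ heights n k) (Ioo 0 1) := by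
  rw [disjoint_left]
  rintro _ ⟨⟨i, -, rfl⟩, ⟨j, -, hji⟩⟩ ⟨h₀, h₁⟩
  have hpos : ∀ {l : ℕ} {x : ℝ}, 0 < x / (l : ℝ) ^ k → 0 < (l : ℝ) ^ k := fun h =>
    (pow_nonneg (Nat.cast_nonneg _) k).lt_of_ne fun h0 => by simp [← h0] at h
  have hm := hpos h₀
  have hn := hpos (hji ▸ h₀)
  have hi₀ : 0 < i := by exact_mod_cast (div_pos_iff_of_pos_right hm).1 h₀
  have hi₁ : i < m ^ k := by exact_mod_cast (div_lt_one hm).1 h₁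
  have key : i * n ^ k = j * m ^ k := by
    rw [div_eq_div_iff hn.ne' hm.ne'] at hji
    exact_mod_cast hji.symm
  have hdvd : m ^ k ∣ i := (Nat.Coprime.pow k k hmn).dvd_of_dvd_mul_right ⟨j, by rw [key, mul_comm]⟩
  exact (Nat.le_of_dvd hi₀ hdvd).not_gt hi₁

end Comb

open Comb

/-- There exist two Peano continua in the plane whose intersection is a continuum that is
not locally connected. -/
theorem exists_peano_continua_with_non_lc_intersection :
    ∃ X Y : Set (ℝ × ℝ),
      IsCompact X ∧ IsConnected X ∧ LocallyConnectedSpace X ∧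
      IsCompact Y ∧ IsConnected Y ∧ LocallyConnectedSpace Y ∧
      IsCompact (X ∩ Y) ∧ IsConnected (X ∩ Y) ∧ ¬ LocallyConnectedSpace ↥(X ∩ Y) := by
  have peano : ∀ n, 2 ≤ n → IsCompact (comb (heights n)) ∧ IsConnected (comb (heights n)) ∧
      LocallyConnectedSpace (comb (heights n)) := fun n hn =>
    ⟨isCompact_comb (heights_subset_Icc n) (finite_heights n),
      (isPathConnected_comb (heights_subset_Icc n) (zero_mem_heights n)).isConnected,
      locallyConnectedSpace_comb (heights_subset_Icc n) (finite_heights n)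
        fun k _ => exists_mem_heights_abs_sub_le hn k⟩
  obtain ⟨hX₁, hX₂, hX₃⟩ := peano 2 le_rfl
  obtain ⟨hY₁, hY₂, hY₃⟩ := peano 3 (by norm_num)
  refine ⟨comb (heights 2), comb (heights 3), hX₁, hX₂, hX₃, hY₁, hY₂, hY₃, ?_⟩
  have hH : ∀ k, heights 2 k ∩ heights 3 k ⊆ Icc 0 1 :=
    fun k => inter_subset_left.trans (heights_subset_Icc 2 k)
  rw [comb_inter (heights_subset_Icc 2)]
  exact ⟨isCompact_comb hH fun k => (finite_heights 2 k).inter_of_left _,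
    (isPathConnected_comb hH fun k => ⟨zero_mem_heights 2 k, zero_mem_heights 3 k⟩).isConnected,
    not_locallyConnectedSpace_comb zero_lt_one le_rfl le_rfl
      (disjoint_heights_inter_Ioo (by norm_num : Nat.Coprime 2 3))⟩
end

section
/- Let K ⊂ ℝ² be a connected compact set and U the unbounded connected component of ℝ² \ K. Then ∂U is a nonempty compact connected set. -/
/-!
Every boundary point of a component `U` of `Kᶜ` lies in `K`, so `∂U = closure U ∩ Uᶜ` is a
nonempty closed subset of the compact set `K`. Both `closure U` and `Uᶜ` are connected: the latter
is `K` together with the closures of the other components, each of which meets `K` along its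
boundary. These two closed connected sets cover the plane, and the plane is unicoherent: a
splitting of their intersection into two closed pieces would produce, via Urysohn's lemma, a map
to the circle without a continuous argument, which cannot exist on a simply connected space.
-/

open Set

section ComplementaryComponents

variable {X : Type*} [TopologicalSpace X]

theorem disjoint_connectedComponentIn_of_notMem {F : Set X} {x y : X}
    (h : y ∉ connectedComponentIn F x) :
    Disjoint (connectedComponentIn F y) (connectedComponentIn F x) := by
  refine disjoint_left.2 fun z hzy hzx => h ?_
  have hy : y ∈ F := connectedComponentIn_nonempty_iff.1 ⟨z, hzy⟩
  rw [connectedComponentIn_eq hzx, ← connectedComponentIn_eq hzy]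
  exact mem_connectedComponentIn hy

theorem IsOpen.frontier_connectedComponentIn_subset [LocallyConnectedSpace X] {O : Set X}
    (hO : IsOpen O) (x : X) : frontier (connectedComponentIn O x) ⊆ Oᶜ := by
  intro z hz hzO
  obtain ⟨y, hyz, hyx⟩ := mem_closure_iff.1 hz.1 _ hO.connectedComponentIn
    (mem_connectedComponentIn hzO)
  have hzx : z ∈ connectedComponentIn O x := by
    rw [connectedComponentIn_eq hyx, ← connectedComponentIn_eq hyz]
    exact mem_connectedComponentIn hzO
  exact hz.2 (by rwa [hO.connectedComponentIn.interior_eq])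

theorem nonempty_frontier_connectedComponentIn [PreconnectedSpace X] {F : Set X} {x : X}
    (hx : x ∈ F) (hF : Fᶜ.Nonempty) : (frontier (connectedComponentIn F x)).Nonempty := by
  obtain ⟨k, hk⟩ := hF
  refine nonempty_frontier_iff.2 ⟨⟨x, mem_connectedComponentIn hx⟩, fun h => hk ?_⟩
  exact connectedComponentIn_subset F x (h ▸ mem_univ k)

theorem IsConnected.isPreconnected_compl_connectedComponentIn_compl [LocallyConnectedSpace X]
    [PreconnectedSpace X] {K : Set X} (hK : IsConnected K) (hKc : IsClosed K) (x : X) :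
    IsPreconnected (connectedComponentIn Kᶜ x)ᶜ := by
  set C : X → Set X := connectedComponentIn Kᶜ
  have hfrontier : ∀ y, frontier (C y) ⊆ K := fun y => by
    simpa using hKc.isOpen_compl.frontier_connectedComponentIn_subset y
  have hpiece : ∀ y, IsPreconnected (K ∪ closure (C y)) := fun y => by
    by_cases hy : y ∈ K
    · simpa [C, connectedComponentIn_eq_empty (notMem_compl_iff.2 hy)] using hK.isPreconnected
    obtain ⟨z, hz⟩ :=
      nonempty_frontier_connectedComponentIn (F := Kᶜ) hy (by simpa using hK.nonempty)
    exact hK.isPreconnected.union z (hfrontier y hz) hz.1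
      isPreconnected_connectedComponentIn.closure
  have hunion : (C x)ᶜ = ⋃ y : ↥(C x)ᶜ, (K ∪ closure (C y)) := by
    refine subset_antisymm (fun z hz => mem_iUnion.2 ⟨⟨z, hz⟩, ?_⟩) (iUnion_subset fun y => ?_)
    · by_cases hzK : z ∈ K
      · exact Or.inl hzK
      · exact Or.inr (subset_closure (mem_connectedComponentIn hzK))
    · refine union_subset (fun k hk hkx => connectedComponentIn_subset _ x hkx hk) ?_
      exact ((disjoint_connectedComponentIn_of_notMem y.2).closure_left
        hKc.isOpen_compl.connectedComponentIn).subset_compl_right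
  obtain ⟨k, hk⟩ := hK.nonempty
  rw [hunion]
  exact isPreconnected_iUnion ⟨k, mem_iInter.2 fun _ => Or.inl hk⟩ fun y => hpiece y

end ComplementaryComponents

section Unicoherence

variable {X : Type*} [TopologicalSpace X]

theorem IsPreconnected.sub_eq_sub_of_circleExp_eq {S : Set X} (hS : IsPreconnected S)
    {f g : X → ℝ} (hf : ContinuousOn f S) (hg : ContinuousOn g S)
    (hfg : ∀ x ∈ S, Circle.exp (f x) = Circle.exp (g x)) {x y : X} (hx : x ∈ S) (hy : y ∈ S) :
    f x - g x = f y - g y := by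
  refine hS.constant_of_mapsTo (T := AddSubgroup.zmultiples (2 * Real.pi))
    (isDiscrete_iff_discreteTopology.2 (NormedSpace.discreteTopology_zmultiples _))
    (hf.sub hg) (fun z hz => ?_) hx hy
  obtain ⟨m, hm⟩ := Circle.exp_eq_exp.1 (hfg z hz)
  exact AddSubgroup.mem_zmultiples_iff.2 ⟨m, by simp [hm, zsmul_eq_mul]⟩

theorem IsCoveringMap.exists_continuousMap_lift {E Y : Type*} [TopologicalSpace E]
    [TopologicalSpace Y] [SimplyConnectedSpace X] [LocallyPathConnectedSpace X] {p : E → Y}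
    (cov : IsCoveringMap p) (hp : Function.Surjective p) (f : C(X, Y)) :
    ∃ F : C(X, E), p ∘ F = f := by
  obtain ⟨x₀⟩ : Nonempty X := inferInstance
  obtain ⟨e₀, he₀⟩ := hp (f x₀)
  obtain ⟨F, ⟨-, hF⟩, -⟩ := cov.existsUnique_continuousMap_lifts f x₀ e₀ he₀
  exact ⟨F, hF⟩

theorem isPreconnected_inter_of_union_eq_univ [NormalSpace X] [SimplyConnectedSpace X]
    [LocallyPathConnectedSpace X] {A B : Set X} (hA : IsClosed A) (hB : IsClosed B)
    (hAc : IsPreconnected A) (hBc : IsPreconnected B) (hAB : A ∪ B = univ) :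
    IsPreconnected (A ∩ B) := by
  classical
  rw [isPreconnected_iff_subset_of_fully_disjoint_closed (hA.inter hB)]
  intro u v hu hv hsub huv
  by_contra! h
  obtain ⟨a, ha, hav⟩ := not_subset.1 h.2
  obtain ⟨b, hb, hbu⟩ := not_subset.1 h.1
  have hau : a ∈ u := (hsub ha).resolve_right hav
  have hbv : b ∈ v := (hsub hb).resolve_left hbu
  obtain ⟨α, hα0, hα1, -⟩ := exists_continuous_zero_one_of_isClosed hu hv huv
  -- `φ = exp (iπα)` on `A` and `exp (-iπα)` on `B` glue along `A ∩ B`, where `α ∈ {0, 1}`.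
  -- An argument `θ` of `φ` then satisfies `θ - πα ≡ const` on `A` and `θ + πα ≡ const` on `B`;
  -- comparing the jumps of `θ` from `a` to `b` gives `π = -π`.
  set f : X → ℝ := fun x => Real.pi * α x
  have hf : Continuous f := by fun_prop
  have hexp_agree : ∀ x ∈ A ∩ B, Circle.exp (f x) = Circle.exp (-f x) := by
    intro x hx
    rcases hsub hx with hxu | hxv
    · simp [f, hα0 hxu]
    · exact Circle.exp_eq_exp.2 ⟨1, by simp [f, hα1 hxv]; ring⟩
  have hfrontier : frontier A ⊆ A ∩ B := fun x hx =>
    ⟨hA.frontier_subset hx,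
      hB.closure_subset_iff.2 (fun y hy => (hAB ▸ mem_univ y).resolve_left hy)
        (frontier_eq_closure_inter_closure.subset hx).2⟩
  set φ : C(X, Circle) := ⟨A.piecewise (Circle.exp ∘ f) (Circle.exp ∘ (-f)),
    (by fun_prop : Continuous (Circle.exp ∘ f)).piecewise
      (fun x hx => hexp_agree x (hfrontier hx)) (by fun_prop)⟩
  obtain ⟨θ, hθ⟩ := Circle.isCoveringMap_exp.exists_continuousMap_lift Circle.exp_surjective φ
  have hθA : ∀ x ∈ A, Circle.exp (θ x) = Circle.exp (f x) := fun x hx => by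
    rw [← Function.comp_apply (f := Circle.exp), hθ]
    exact piecewise_eq_of_mem _ _ _ hx
  have hθB : ∀ x ∈ B, Circle.exp (θ x) = Circle.exp (-f x) := fun x hx => by
    rw [← Function.comp_apply (f := Circle.exp), hθ]
    by_cases hxA : x ∈ A
    · exact (piecewise_eq_of_mem _ _ _ hxA).trans (hexp_agree x ⟨hxA, hx⟩)
    · exact piecewise_eq_of_notMem _ _ _ hxA
  have hA_const := hAc.sub_eq_sub_of_circleExp_eq θ.continuous.continuousOn hf.continuousOn
    hθA ha.1 hb.1
  have hB_const := hBc.sub_eq_sub_of_circleExp_eq θ.continuous.continuousOn hf.neg.continuousOn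
    hθB ha.2 hb.2
  have hαa : α a = 0 := hα0 hau
  have hαb : α b = 1 := hα1 hbv
  simp only [f, Pi.neg_apply, hαa, hαb] at hA_const hB_const
  linarith [Real.pi_pos]

end Unicoherence

theorem frontier_unbounded_component_is_continuum_general (K : Set (ℝ × ℝ))
    (hKc : IsCompact K) (hKconn : IsConnected K) (U : Set (ℝ × ℝ))
    (hU : ∃ p ∈ Kᶜ, U = connectedComponentIn Kᶜ p) :
    (frontier U).Nonempty ∧ IsCompact (frontier U) ∧ IsConnected (frontier U) := by
  obtain ⟨p, hp, rfl⟩ := hU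
  have hKopen : IsOpen Kᶜ := hKc.isClosed.isOpen_compl
  have hfrontier : frontier (connectedComponentIn Kᶜ p) ⊆ K := by
    simpa using hKopen.frontier_connectedComponentIn_subset p
  have hne := nonempty_frontier_connectedComponentIn hp (by simpa using hKconn.nonempty)
  refine ⟨hne, hKc.of_isClosed_subset isClosed_frontier hfrontier, hne, ?_⟩
  rw [hKopen.connectedComponentIn.frontier_eq, sdiff_eq]
  exact isPreconnected_inter_of_union_eq_univ isClosed_closure
    hKopen.connectedComponentIn.isClosed_compl isPreconnected_connectedComponentIn.closure
    (hKconn.isPreconnected_compl_connectedComponentIn_compl hKc.isClosed p)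
    (eq_univ_of_subset (union_subset_union_left _ subset_closure) (union_compl_self _))

/-- If `K` is a compact connected planar set and `U` is the unbounded connected component
of its complement, then the boundary `∂U` is a nonempty compact connected set. -/
theorem frontier_unbounded_component_is_continuum (K : Set (ℝ × ℝ))
    (hKc : IsCompact K) (hKconn : IsConnected K) (U : Set (ℝ × ℝ))
    (hU : ∃ p ∈ Kᶜ, U = connectedComponentIn Kᶜ p)
    (hUnb : ¬ Bornology.IsBounded U) :
    (frontier U).Nonempty ∧ IsCompact (frontier U) ∧ IsConnected (frontier U) :=
  frontier_unbounded_component_is_continuum_general K hKc hKconn U hU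
end

section
/- Let X be a compact metric space and suppose for every ε > 0 at most finitely many connected components of X have diameter greater than ε. If (x_n), (y_n) are sequences in X with x_n and y_n in the same component for each n, x_n → x, y_n → y, and x ≠ y, then there is a single component of X containing x_n and y_n for infinitely many n. -/
open Filter Metric

theorem dist_le_diam_connectedComponent {X : Type*} [PseudoMetricSpace X] [BoundedSpace X]
    {x y : X} (h : connectedComponent x = connectedComponent y) :
    dist x y ≤ diam (connectedComponent x) :=
  dist_le_diam_of_mem (Bornology.IsBounded.all _) mem_connectedComponent
    (connectedComponent_eq_iff_mem.1 h.symm)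

/-- In a compact metric space with only finitely many connected components of diameter
greater than any `ε > 0`: if `xₙ` and `yₙ` lie in the same component for each `n`,
`xₙ → x`, `yₙ → y` and `x ≠ y`, then some single component contains `xₙ` and `yₙ` for
infinitely many `n`. -/
theorem pigeonhole_components {X : Type*} [MetricSpace X] [CompactSpace X]
    (hfin : ∀ ε : ℝ, 0 < ε →
      {S : Set X | (∃ p : X, S = connectedComponent p) ∧ ε < Metric.diam S}.Finite)
    (x y : ℕ → X) (hsame : ∀ n, connectedComponent (x n) = connectedComponent (y n))
    (a b : X) (hx : Filter.Tendsto x Filter.atTop (nhds a))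
    (hy : Filter.Tendsto y Filter.atTop (nhds b)) (hab : a ≠ b) :
    ∃ S : Set X, (∃ p : X, S = connectedComponent p) ∧
      {n : ℕ | x n ∈ S ∧ y n ∈ S}.Infinite := by
  have hab' : 0 < dist a b := dist_pos.2 hab
  set ε := dist a b / 2
  have hfar : ∀ᶠ n in atTop, ε < dist (x n) (y n) :=
    (hx.dist hy).eventually (lt_mem_nhds (half_lt_self hab'))
  -- Eventually the component of `xₙ` contains `xₙ, yₙ` and has diameter `> ε`, so it is one
  -- of finitely many; by pigeonhole one of them is hit infinitely often.
  have hlarge : ∃ᶠ n in atTop, ∃ S ∈ {S : Set X |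
      (∃ p : X, S = connectedComponent p) ∧ ε < diam S}, x n ∈ S ∧ y n ∈ S := by
    refine (hfar.mono fun n hn => ?_).frequently
    exact ⟨_, ⟨⟨x n, rfl⟩, hn.trans_le (dist_le_diam_connectedComponent (hsame n))⟩,
      mem_connectedComponent, connectedComponent_eq_iff_mem.1 (hsame n).symm⟩
  obtain ⟨S, ⟨hS, -⟩, hfreq⟩ := (hfin ε (half_pos hab')).frequently_exists.1 hlarge
  exact ⟨S, hS, Nat.frequently_atTop_iff_infinite.1 hfreq⟩
end
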